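/- arXiv:0908.4472 — 2 statements merged into one kernel-verified Lean document; each statement's English description precedes it below -/
import Mathlib

section
/- Let H ∈ (0,1). For every s ≥ 1 and every δ with 0 ≤ δ ≤ 1/H − 1, one has (1+δ)·s^{H} ≤ s + δ. -/
/-- For `H ∈ (0,1)`, every `s ≥ 1` and every `δ ∈ [0, 1/H − 1]`,
one has `(1+δ)·s^H ≤ s + δ`. -/
theorem one_add_delta_mul_rpow_le (H : ℝ) (hH : H ∈ Set.Ioo (0 : ℝ) 1) :
    ∀ s : ℝ, 1 ≤ s → ∀ δ : ℝ, 0 ≤ δ → δ ≤ 1 / H - 1 →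
      (1 + δ) * s ^ H ≤ s + δ := by
  obtain ⟨hH0, hH1⟩ := hH
  intro s hs δ hδ0 hδ1
  have key : s ^ H ≤ 1 + H * (s - 1) := by
    have := rpow_one_add_le_one_add_mul_self (s := s - 1)
      (by linarith) hH0.le hH1.le
    simpa using this
  have hδH : (1 + δ) * H ≤ 1 := by
    have h : 1 + δ ≤ 1 / H := by linarith
    calc (1 + δ) * H ≤ (1 / H) * H := by nlinarith
      _ = 1 := one_div_mul_cancel hH0.ne'
  have h1δ : 0 ≤ 1 + δ := by linarith
  nlinarith [mul_le_mul_of_nonneg_left key h1δ, mul_nonneg (sub_nonneg.2 hδH) (sub_nonneg.2 hs)]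
end

section
/- Define, for H ∈ (1/2, 1), φ(H) := (1/(H·(2H−1)·(2−2H))) · Γ(3/2 − H) / (Γ(H − 1/2) · Γ(2 − 2H)), where Γ is the real Gamma function. Then lim_{H→1⁻} (φ(H) − 1)/(H − 1) = −3 − 2·Γ′(1/2)/Γ(1/2) − 2·γ_EM, where Γ′(1/2) is the derivative of the real Gamma function at 1/2 and γ_EM is the Euler–Mascheroni constant; moreover this limit is strictly greater than −2. -/
open Filter Real

/-!
Since `Γ(3 − 2H) = (2 − 2H) Γ(2 − 2H)`, the function `φ` agrees for `H ≠ 1` with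
`phiExt H = Γ(3/2 − H) / (H (2H − 1) Γ(H − 1/2) Γ(3 − 2H))`, which is differentiable at `1`
with value `1` there. The limit is therefore `phiExt'(1)`, and the quotient rule with
`Γ'(1) = −γ` and `Γ'(1/2) = −√π (γ + 2 log 2)` gives `phiExt'(1) = 4 log 2 − 3`, which
exceeds `−2` since `log 2 > 1/4`.
-/

noncomputable def phiExt (H : ℝ) : ℝ :=
  Gamma (3 / 2 - H) / (H * (2 * H - 1) * Gamma (H - 1 / 2) * Gamma (3 - 2 * H))

lemma phiExt_eq_of_ne_one {H : ℝ} (hH : H ≠ 1) :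
    phiExt H = (1 / (H * (2 * H - 1) * (2 - 2 * H))) * Gamma (3 / 2 - H)
      / (Gamma (H - 1 / 2) * Gamma (2 - 2 * H)) := by
  have h : 2 - 2 * H ≠ 0 := fun h => hH (by linarith)
  rw [phiExt, show 3 - 2 * H = 2 - 2 * H + 1 by ring, Gamma_add_one h]
  simp only [div_eq_mul_inv, mul_inv, one_mul]
  ring

lemma phiExt_one : phiExt 1 = 1 := by
  have : Gamma (1 / 2) ≠ 0 := by rw [Gamma_one_half_eq]; positivity
  norm_num [phiExt, Gamma_one, this]

lemma logDeriv_Gamma_one_half :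
    logDeriv Gamma (1 / 2) = -(eulerMascheroniConstant + 2 * log 2) := by
  rw [logDeriv_apply, hasDerivAt_Gamma_one_half.deriv, Gamma_one_half_eq]
  field_simp

lemma hasDerivAt_phiExt_one : HasDerivAt phiExt (4 * log 2 - 3) 1 := by
  have hnum : HasDerivAt (fun H => Gamma (3 / 2 - H))
      (-√π * (eulerMascheroniConstant + 2 * log 2) * -1) 1 :=
    hasDerivAt_Gamma_one_half.comp_of_eq 1 ((hasDerivAt_id' 1).const_sub (3 / 2)) (by norm_num)
  have hpoly : HasDerivAt (fun H : ℝ => H * (2 * H - 1)) 3 1 :=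
    ((hasDerivAt_id' 1).fun_mul (((hasDerivAt_id' 1).const_mul 2).sub_const 1)).congr_deriv
      (by norm_num)
  have hΓ₁ : HasDerivAt (fun H => Gamma (H - 1 / 2))
      (-√π * (eulerMascheroniConstant + 2 * log 2) * 1) 1 :=
    hasDerivAt_Gamma_one_half.comp_of_eq 1 ((hasDerivAt_id' 1).sub_const (1 / 2)) (by norm_num)
  have hΓ₂ : HasDerivAt (fun H => Gamma (3 - 2 * H)) (-eulerMascheroniConstant * -(2 * 1)) 1 :=
    hasDerivAt_Gamma_one.comp_of_eq 1 (((hasDerivAt_id' 1).const_mul 2).const_sub 3) (by norm_num)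
  have hΓ : Gamma (1 / 2) = √π := Gamma_one_half_eq
  have hsqrt : 0 < √π := sqrt_pos.mpr pi_pos
  refine (hnum.fun_div ((hpoly.fun_mul hΓ₁).fun_mul hΓ₂) ?_).congr_deriv ?_
  · norm_num [hΓ, Gamma_one, hsqrt.ne']
  · norm_num [hΓ, Gamma_one]
    field_simp
    ring

/-- With `φ(H) := (1/(H(2H−1)(2−2H))) · Γ(3/2 − H) / (Γ(H − 1/2) Γ(2 − 2H))`
for `H ∈ (1/2, 1)`, the limit of `(φ(H) − 1)/(H − 1)` as `H → 1⁻` equals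
`−3 − 2 Γ′(1/2)/Γ(1/2) − 2 γ_EM`, and this limit is strictly greater
than `−2`. -/
theorem phi_one_sided_derivative_at_one :
    Filter.Tendsto
        (fun H : ℝ =>
          ((1 / (H * (2 * H - 1) * (2 - 2 * H))) * Real.Gamma (3 / 2 - H)
              / (Real.Gamma (H - 1 / 2) * Real.Gamma (2 - 2 * H)) - 1)
            / (H - 1))
        (nhdsWithin 1 (Set.Ioo (1 / 2 : ℝ) 1))
        (nhds (-3 - 2 * (deriv Real.Gamma (1 / 2)) / Real.Gamma (1 / 2)
          - 2 * Real.eulerMascheroniConstant)) ∧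
      (-2 : ℝ) < -3 - 2 * (deriv Real.Gamma (1 / 2)) / Real.Gamma (1 / 2)
          - 2 * Real.eulerMascheroniConstant := by
  have hlim : -3 - 2 * deriv Gamma (1 / 2) / Gamma (1 / 2) - 2 * eulerMascheroniConstant
      = 4 * log 2 - 3 := by
    rw [mul_div_assoc, ← logDeriv_apply, logDeriv_Gamma_one_half]
    ring
  rw [hlim]
  refine ⟨?_, by linarith [log_two_gt_d9]⟩
  refine ((hasDerivAt_iff_tendsto_slope.mp hasDerivAt_phiExt_one).mono_left
    (nhdsWithin_mono _ fun H hH => hH.2.ne)).congr' ?_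
  filter_upwards [self_mem_nhdsWithin] with H hH
  rw [slope_def_field, phiExt_one, phiExt_eq_of_ne_one hH.2.ne]
end
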